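/- With a₃ = (c₁² + c₂²)/(a₁a₂) and a = (bc₁ + a₁a₃ + a₂a₃ - a₁a₂)/c₂, where c₂ satisfies the quartic relation c₂⁴(a₁-a₂)² + 2c₂²(a₁³a₂² + a₁²a₂³ + (a₁a₂² + a₁²a₂)bc₁ + (a₁²+a₂²)c₁² + 2a₁²a₂²c) + ((a₁+a₂)c₁² - a₁²a₂² + a₁a₂c₁b)² = 0, the polynomial 4h³ + (4c + a²)h² + 4(bc₁ - ac₂)h + 4(c₁² + c₂²) equals 4(h - a₁)(h - a₂)(h + a₃) for all real h. -/
import Mathlib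


theorem cubic_factorization (a₁ a₂ b c c₁ c₂ : ℝ)
    (hne : a₁ ≠ a₂) (ha₁ : a₁ > 0) (ha₂ : a₂ > 0) (hc₂ : c₂ ≠ 0)
    (a₃ : ℝ) (ha₃ : a₃ = (c₁^2 + c₂^2) / (a₁*a₂))
    (a : ℝ) (ha : a = (b*c₁ + a₁*a₃ + a₂*a₃ - a₁*a₂) / c₂)
    (hquartic : c₂^4*(a₁-a₂)^2
      + 2*c₂^2*(a₁^3*a₂^2 + a₁^2*a₂^3 + (a₁*a₂^2 + a₁^2*a₂)*b*c₁
        + (a₁^2+a₂^2)*c₁^2 + 2*a₁^2*a₂^2*c)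
      + ((a₁+a₂)*c₁^2 - a₁^2*a₂^2 + a₁*a₂*c₁*b)^2 = 0) :
    ∀ h : ℝ, 4*h^3 + (4*c + a^2)*h^2 + 4*(b*c₁ - a*c₂)*h + 4*(c₁^2 + c₂^2)
      = 4*(h - a₁)*(h - a₂)*(h + a₃) := by
  have ha₁0 : a₁ ≠ 0 := ne_of_gt ha₁
  have ha₂0 : a₂ ≠ 0 := ne_of_gt ha₂
  have h2 : a₁*a₂*a₃ = c₁^2 + c₂^2 := by
    rw [ha₃]; field_simp
  have h1 : a*c₂ = b*c₁ + a₁*a₃ + a₂*a₃ - a₁*a₂ := by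
    rw [ha]; field_simp
  have h3 : 4*c + a^2 = -4*(a₁+a₂) + 4*a₃ := by
    have hN : a₁*a₂*(a*c₂) = a₁*a₂*b*c₁ + (a₁+a₂)*(c₁^2+c₂^2) - a₁^2*a₂^2 := by
      rw [h1]; linear_combination (a₁+a₂) * h2
    have hsq : (a₁*a₂*(a*c₂))^2 = (a₁*a₂*b*c₁ + (a₁+a₂)*(c₁^2+c₂^2) - a₁^2*a₂^2)^2 := by
      rw [hN]
    have key : a₁^2*a₂^2*c₂^2*(4*c + a^2) = a₁^2*a₂^2*c₂^2*(-4*(a₁+a₂) + 4*a₃) := by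
      linear_combination hsq + hquartic - 4*a₁*a₂*c₂^2 * h2
    have hnz : a₁^2*a₂^2*c₂^2 ≠ 0 := by positivity
    exact mul_left_cancel₀ hnz key
  intro h
  linear_combination h^2 * h3 - 4*h * h1 - 4 * h2
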